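/- Let X be a δ-hyperbolic geodesic space, ℓ a bi-infinite geodesic, K > 0, C > 0, and f : [a,b] → X a continuous rectifiable path with d(f(t),ℓ) ≥ K for all t, d(f(a),ℓ) ≤ K + C and d(f(b),ℓ) ≤ K + C. Set d = d(f(a),f(b)), L = length(f([a,b])), and C' = max(C,δ). If d ≤ 2K + 6δ, then L ≥ (2^{d/(2δ) − C'/δ − 5} − 2)δ. -/

import Mathlib

/-!
Let `m` be the midpoint of a geodesic from `f a` to `f b`. Thin triangles with vertices `f a`,
`f b` and their nearest points on `ℓ` put `m` within `max (K + C + 4δ - d/2) (2δ)` of `ℓ`; since the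
path stays at distance `≥ K` from `ℓ`, every point of it is at distance `≥ d/2 - C' - 4δ` from `m`.
On the other hand, cutting a subpath at its arc-length midpoint and applying thinness to the
triangle formed by its chord and the two half-chords, `n` bisections give a subpath of length
`L / 2ⁿ` whose chord passes within `nδ` of `m`; so some point of the path lies within
`nδ + L / 2ⁿ⁺¹` of `m`. Comparing both bounds at `n = ⌊d/(2δ) - C'/δ - 5⌋₊` gives
`L ≥ 2 ^ (d/(2δ) - C'/δ - 5) δ`.
-/

open Metric Set

/-- `g` parametrizes a geodesic segment from `x` to `y` (unit speed on `[0, dist x y]`). -/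
def IsGeodParam {X : Type*} [MetricSpace X] (g : ℝ → X) (x y : X) : Prop :=
  g 0 = x ∧ g (dist x y) = y ∧
    ∀ s ∈ Set.Icc (0:ℝ) (dist x y), ∀ t ∈ Set.Icc (0:ℝ) (dist x y),
      dist (g s) (g t) = |s - t|

/-- The geodesic segment as a subset of `X`. -/
def segSet {X : Type*} [MetricSpace X] (g : ℝ → X) (x y : X) : Set X :=
  g '' Set.Icc 0 (dist x y)

/-- `X` is δ-hyperbolic: every geodesic triangle is δ-thin. -/
def DeltaThin (X : Type*) [MetricSpace X] (δ : ℝ) : Prop :=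
  ∀ (x y z : X) (gxy gyz gxz : ℝ → X),
    IsGeodParam gxy x y → IsGeodParam gyz y z → IsGeodParam gxz x z →
    ∀ p ∈ segSet gxy x y, ∃ q ∈ segSet gyz y z ∪ segSet gxz x z, dist p q ≤ δ

/-- `ℓ` is a bi-infinite geodesic (an isometric embedding of `ℝ`). -/
def IsGeodLine {X : Type*} [MetricSpace X] (ℓ : ℝ → X) : Prop :=
  ∀ s t : ℝ, dist (ℓ s) (ℓ t) = |s - t|

open Filter

section Geodesics

variable {X : Type*} [MetricSpace X]

lemma IsGeodParam.dist_add_dist_of_mem_segSet {g : ℝ → X} {x y p : X} (hg : IsGeodParam g x y)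
    (hp : p ∈ segSet g x y) : dist x p + dist p y = dist x y := by
  obtain ⟨h0, h1, hiso⟩ := hg
  obtain ⟨u, hu, rfl⟩ := hp
  have hD : dist x y ∈ Icc (0 : ℝ) (dist x y) := ⟨dist_nonneg, le_rfl⟩
  rw [← h0, hiso 0 ⟨le_rfl, dist_nonneg⟩ u hu, ← h1, hiso u hu _ hD, h0, h1,
    abs_of_nonpos (by linarith [hu.1]), abs_of_nonpos (by linarith [hu.2])]
  ring

lemma IsGeodParam.exists_midpoint {g : ℝ → X} {x y : X} (hg : IsGeodParam g x y) :
    ∃ m ∈ segSet g x y, dist x m = dist x y / 2 ∧ dist m y = dist x y / 2 := by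
  have hmid : dist x y / 2 ∈ Icc (0 : ℝ) (dist x y) :=
    ⟨by positivity, by linarith [dist_nonneg (x := x) (y := y)]⟩
  have hxm : dist x (g (dist x y / 2)) = dist x y / 2 := by
    obtain ⟨h0, -, hiso⟩ := hg
    have := hiso 0 ⟨le_rfl, dist_nonneg⟩ _ hmid
    rwa [h0, zero_sub, abs_neg, abs_of_nonneg hmid.1] at this
  refine ⟨_, ⟨_, hmid, rfl⟩, hxm, ?_⟩
  linarith [hg.dist_add_dist_of_mem_segSet ⟨_, hmid, rfl⟩]

lemma IsGeodParam.min_dist_le_half {g : ℝ → X} {x y p : X} (hg : IsGeodParam g x y)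
    (hp : p ∈ segSet g x y) : min (dist p x) (dist p y) ≤ dist x y / 2 := by
  rw [dist_comm p x, ← hg.dist_add_dist_of_mem_segSet hp]
  rcases le_total (dist x p) (dist p y) with h | h
  · rw [min_eq_left h]; linarith
  · rw [min_eq_right h]; linarith

lemma IsGeodParam.dist_le_of_mem_segSet {g : ℝ → X} {y p q : X} (hg : IsGeodParam g y p)
    (hq : q ∈ segSet g y p) (m : X) : dist m p ≤ 2 * dist m q + dist y p - dist y m := by
  linarith [hg.dist_add_dist_of_mem_segSet hq, dist_triangle m q p, dist_triangle y q m,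
    dist_comm q m]

lemma IsGeodLine.exists_isGeodParam {ℓ : ℝ → X} (hℓ : IsGeodLine ℓ) (s t : ℝ) :
    ∃ g : ℝ → X, IsGeodParam g (ℓ s) (ℓ t) ∧ segSet g (ℓ s) (ℓ t) ⊆ range ℓ := by
  rcases le_total s t with h | h
  · refine ⟨fun u => ℓ (s + u), ⟨by simp, ?_, fun u _ v _ => ?_⟩, ?_⟩
    · rw [hℓ s t, abs_of_nonpos (by linarith)]; ring_nf
    · rw [hℓ]; ring_nf
    · rintro p ⟨u, _, rfl⟩; exact ⟨s + u, rfl⟩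
  · refine ⟨fun u => ℓ (s - u), ⟨by simp, ?_, fun u _ v _ => ?_⟩, ?_⟩
    · rw [hℓ s t, abs_of_nonneg (by linarith)]; ring_nf
    · rw [hℓ, abs_sub_comm]; ring_nf
    · rintro p ⟨u, _, rfl⟩; exact ⟨s - u, rfl⟩

lemma IsGeodLine.exists_dist_eq_infDist {ℓ : ℝ → X} (hℓ : IsGeodLine ℓ) (x : X) :
    ∃ t, dist x (ℓ t) = infDist x (range ℓ) := by
  have hcont : Continuous fun t => dist x (ℓ t) :=
    continuous_const.dist (Isometry.of_dist_eq fun s t => by rw [hℓ, Real.dist_eq]).continuous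
  have hfar : ∀ᶠ t in cocompact ℝ, dist x (ℓ 0) ≤ dist x (ℓ t) := by
    have hgrow : ∀ t, |t| - dist x (ℓ 0) ≤ dist x (ℓ t) := fun t => by
      have h0t : dist (ℓ 0) (ℓ t) = |t| := by rw [hℓ, zero_sub, abs_neg]
      linarith [dist_triangle (ℓ 0) x (ℓ t), dist_comm x (ℓ 0)]
    rw [cocompact_eq_atBot_atTop, eventually_sup]
    constructor
    · filter_upwards [eventually_le_atBot (-(2 * dist x (ℓ 0)))] with t ht
      linarith [hgrow t, neg_abs_le t]
    · filter_upwards [eventually_ge_atTop (2 * dist x (ℓ 0))] with t ht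
      linarith [hgrow t, le_abs_self t]
  obtain ⟨t, ht⟩ := hcont.exists_forall_le' 0 hfar
  refine ⟨t, le_antisymm ?_ (infDist_le_dist_of_mem ⟨t, rfl⟩)⟩
  by_contra! hlt
  obtain ⟨_, ⟨s, rfl⟩, hs⟩ := (infDist_lt_iff (range_nonempty ℓ)).1 hlt
  exact (ht s).not_gt hs

end Geodesics

def HasGeodesicNear {X : Type*} [MetricSpace X] (x y m : X) (r : ℝ) : Prop :=
  ∃ g : ℝ → X, IsGeodParam g x y ∧ ∃ w ∈ segSet g x y, dist m w ≤ r

namespace DeltaThin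

variable {X : Type*} [MetricSpace X] {δ : ℝ}

lemma infDist_range_le (hyp : DeltaThin X δ) (hδ : 0 ≤ δ)
    (hgeo : ∀ p q : X, ∃ g : ℝ → X, IsGeodParam g p q) {ℓ : ℝ → X} (hℓ : IsGeodLine ℓ)
    {x y m : X} {g : ℝ → X} (hg : IsGeodParam g x y) (hm : m ∈ segSet g x y) {s t R r : ℝ}
    (hxR : dist x (ℓ s) ≤ R) (hyR : dist y (ℓ t) ≤ R) (hxr : r ≤ dist x m)
    (hyr : r ≤ dist y m) :
    infDist m (range ℓ) ≤ max (R + 4 * δ - r) (2 * δ) := by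
  obtain ⟨gxt, hgxt⟩ := hgeo x (ℓ t)
  obtain ⟨gyt, hgyt⟩ := hgeo y (ℓ t)
  obtain ⟨gxs, hgxs⟩ := hgeo x (ℓ s)
  obtain ⟨gts, hgts, hgtsℓ⟩ := hℓ.exists_isGeodParam t s
  obtain ⟨q, hq, hmq⟩ := hyp x y (ℓ t) g gyt gxt hg hgyt hgxt m hm
  rcases hq with hq | hq
  · have := hgyt.dist_le_of_mem_segSet hq m
    exact le_max_of_le_left <| (infDist_le_dist_of_mem (mem_range_self t)).trans (by linarith)
  obtain ⟨q', hq', hqq'⟩ := hyp x (ℓ t) (ℓ s) gxt gts gxs hgxt hgts hgxs q hq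
  have hmq' : dist m q' ≤ 2 * δ := by linarith [dist_triangle m q q']
  rcases hq' with hq' | hq'
  · exact le_max_of_le_right <| (infDist_le_dist_of_mem (hgtsℓ hq')).trans hmq'
  · have := hgxs.dist_le_of_mem_segSet hq' m
    exact le_max_of_le_left <| (infDist_le_dist_of_mem (mem_range_self s)).trans (by linarith)

lemma hasGeodesicNear (hyp : DeltaThin X δ) (hgeo : ∀ p q : X, ∃ g : ℝ → X, IsGeodParam g p q)
    {x y m : X} {r : ℝ} (h : HasGeodesicNear x y m r) (z : X) :
    HasGeodesicNear y z m (r + δ) ∨ HasGeodesicNear x z m (r + δ) := by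
  obtain ⟨g, hg, w, hw, hmw⟩ := h
  obtain ⟨gyz, hgyz⟩ := hgeo y z
  obtain ⟨gxz, hgxz⟩ := hgeo x z
  obtain ⟨q, hq, hwq⟩ := hyp x y z g gyz gxz hg hgyz hgxz w hw
  have hmq : dist m q ≤ r + δ := by linarith [dist_triangle m w q]
  rcases hq with hq | hq
  · exact .inl ⟨gyz, hgyz, q, hq, hmq⟩
  · exact .inr ⟨gxz, hgxz, q, hq, hmq⟩

end DeltaThin

lemma HasGeodesicNear.min_dist_le {X : Type*} [MetricSpace X] {x y m : X} {r : ℝ}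
    (h : HasGeodesicNear x y m r) : min (dist m x) (dist m y) ≤ r + dist x y / 2 := by
  obtain ⟨g, hg, w, hw, hmw⟩ := h
  have := hg.min_dist_le_half hw
  rcases min_le_iff.1 this with hx | hy
  · exact min_le_of_left_le (by linarith [dist_triangle m w x])
  · exact min_le_of_right_le (by linarith [dist_triangle m w y])

namespace DeltaThin

variable {X : Type*} [MetricSpace X] {δ : ℝ} {f : ℝ → X} {v : ℝ → ℝ} {I : Set ℝ}

lemma exists_hasGeodesicNear_halving (hyp : DeltaThin X δ)
    (hgeo : ∀ p q : X, ∃ g : ℝ → X, IsGeodParam g p q) (hI : I.OrdConnected)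
    (hv : ContinuousOn v I) {s t : ℝ} (hs : s ∈ I) (ht : t ∈ I) {m : X} {r : ℝ}
    (h : HasGeodesicNear (f s) (f t) m r) :
    ∃ s' ∈ I, ∃ t' ∈ I, |v s' - v t'| = |v s - v t| / 2 ∧
      HasGeodesicNear (f s') (f t') m (r + δ) := by
  have hmid : (v s + v t) / 2 ∈ uIcc (v s) (v t) := by
    rcases le_total (v s) (v t) with hst | hst
    · rw [uIcc_of_le hst]; constructor <;> linarith
    · rw [uIcc_of_ge hst]; constructor <;> linarith
  obtain ⟨c, hc, hvc⟩ := intermediate_value_uIcc (hv.mono (hI.uIcc_subset hs ht)) hmid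
  have hcI : c ∈ I := hI.uIcc_subset hs ht hc
  rcases hyp.hasGeodesicNear hgeo h (f c) with h' | h'
  · refine ⟨t, ht, c, hcI, ?_, h'⟩
    rw [hvc, show v t - (v s + v t) / 2 = -((v s - v t) / 2) by ring, abs_neg, abs_div, abs_two]
  · refine ⟨s, hs, c, hcI, ?_, h'⟩
    rw [hvc, show v s - (v s + v t) / 2 = (v s - v t) / 2 by ring, abs_div, abs_two]

lemma exists_hasGeodesicNear_two_pow (hyp : DeltaThin X δ)
    (hgeo : ∀ p q : X, ∃ g : ℝ → X, IsGeodParam g p q) (hI : I.OrdConnected)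
    (hv : ContinuousOn v I) {a b : ℝ} (ha : a ∈ I) (hb : b ∈ I) {m : X} {r : ℝ}
    (h : HasGeodesicNear (f a) (f b) m r) (n : ℕ) :
    ∃ s ∈ I, ∃ t ∈ I, |v s - v t| = |v a - v b| / 2 ^ n ∧
      HasGeodesicNear (f s) (f t) m (r + n * δ) := by
  induction n with
  | zero => exact ⟨a, ha, b, hb, by simp, by simpa using h⟩
  | succ n ih =>
    obtain ⟨s, hs, t, ht, hst, hnear⟩ := ih
    obtain ⟨s', hs', t', ht', hst', hnear'⟩ :=
      hyp.exists_hasGeodesicNear_halving hgeo hI hv hs ht hnear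
    refine ⟨s', hs', t', ht', by rw [hst', hst, pow_succ, div_div], ?_⟩
    convert hnear' using 1
    push_cast
    ring

lemma exists_dist_le (hyp : DeltaThin X δ)
    (hgeo : ∀ p q : X, ∃ g : ℝ → X, IsGeodParam g p q) (hI : I.OrdConnected)
    (hv : ContinuousOn v I) (hfv : ∀ s ∈ I, ∀ t ∈ I, dist (f s) (f t) ≤ |v s - v t|)
    {a b : ℝ} (ha : a ∈ I) (hb : b ∈ I) {m : X} {r : ℝ}
    (h : HasGeodesicNear (f a) (f b) m r) (n : ℕ) :
    ∃ t ∈ I, dist m (f t) ≤ r + n * δ + |v a - v b| / 2 ^ (n + 1) := by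
  obtain ⟨s, hs, t, ht, hst, hnear⟩ := hyp.exists_hasGeodesicNear_two_pow hgeo hI hv ha hb h n
  have hhalf : dist (f s) (f t) / 2 ≤ |v a - v b| / 2 ^ (n + 1) := by
    rw [pow_succ, ← div_div, ← hst]
    linarith [hfv s hs t ht]
  rcases min_le_iff.1 hnear.min_dist_le with hms | hmt
  · exact ⟨s, hs, by linarith⟩
  · exact ⟨t, ht, by linarith⟩

end DeltaThin

section Variation

variable {α : Type*} [LinearOrder α] {E : Type*} [PseudoMetricSpace E] {f : α → E} {s : Set α}

lemma dist_le_abs_variationOnFromTo (hf : LocallyBoundedVariationOn f s) {a b : α}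
    (ha : a ∈ s) (hb : b ∈ s) : dist (f a) (f b) ≤ |variationOnFromTo f s a b| := by
  wlog hab : a ≤ b generalizing a b
  · rw [dist_comm, variationOnFromTo.eq_neg_swap, abs_neg]
    exact this hb ha (le_of_not_ge hab)
  rw [variationOnFromTo.eq_of_le f s hab, ENNReal.abs_toReal, dist_edist]
  exact ENNReal.toReal_mono (hf a b ha hb)
    (eVariationOn.edist_le f ⟨ha, le_rfl, hab⟩ ⟨hb, hab, le_rfl⟩)

lemma continuousOn_variationOnFromTo [TopologicalSpace α] [OrderTopology α]
    (hf : ContinuousOn f s) (hbv : LocallyBoundedVariationOn f s) {a : α} (ha : a ∈ s) :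
    ContinuousOn (variationOnFromTo f s a) s := by
  intro x hx
  have hleft : ContinuousWithinAt (variationOnFromTo f s a) (s ∩ Iio x) x := by
    simpa [ContinuousWithinAt] using variationOnFromTo.tendsto_left ha hx hbv
      ((hf x hx).tendsto.mono_left (nhdsWithin_mono _ inter_subset_left))
  have hright : ContinuousWithinAt (variationOnFromTo f s a) (s ∩ Ioi x) x := by
    simpa [ContinuousWithinAt] using variationOnFromTo.tendsto_right ha hx hbv
      ((hf x hx).tendsto.mono_left (nhdsWithin_mono _ inter_subset_left))
  refine (continuousWithinAt_insert_self.2 (hleft.union hright)).mono fun y hy => ?_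
  rcases lt_trichotomy y x with h | rfl | h
  · exact .inr (.inl ⟨hy, h⟩)
  · exact .inl rfl
  · exact .inr (.inr ⟨hy, h⟩)

end Variation

lemma two_rpow_sub_two_mul_le {δ L A : ℝ} (hδ : 0 < δ) (hL : 0 ≤ L)
    (h : ∀ n : ℕ, (A + 1) * δ ≤ n * δ + L / 2 ^ (n + 1)) : (2 ^ A - 2) * δ ≤ L := by
  rcases lt_or_ge A 0 with hA | hA
  · have : (2 : ℝ) ^ A < 1 := Real.rpow_lt_one_of_one_lt_of_neg one_lt_two hA
    nlinarith
  set n := ⌊A⌋₊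
  have hpow : (2 : ℝ) ^ A ≤ 2 ^ (n + 1) := by
    rw [← Real.rpow_natCast]
    exact Real.rpow_le_rpow_of_exponent_le one_le_two (by push_cast; linarith [Nat.lt_floor_add_one A])
  have hδL : δ ≤ L / 2 ^ (n + 1) := by nlinarith [h n, Nat.floor_le hA]
  rw [le_div_iff₀ (by positivity)] at hδL
  nlinarith

lemma DeltaThin.exists_dist_le_of_eVariationOn {X : Type*} [MetricSpace X] {δ : ℝ}
    (hyp : DeltaThin X δ) (hgeo : ∀ p q : X, ∃ g : ℝ → X, IsGeodParam g p q) {a b : ℝ}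
    (hab : a ≤ b) {f : ℝ → X} (hf : ContinuousOn f (Icc a b))
    (hrect : eVariationOn f (Icc a b) ≠ ⊤) {m : X} {r : ℝ} (h : HasGeodesicNear (f a) (f b) m r)
    (n : ℕ) :
    ∃ t ∈ Icc a b, dist m (f t) ≤ r + n * δ + (eVariationOn f (Icc a b)).toReal / 2 ^ (n + 1) := by
  have haI : a ∈ Icc a b := left_mem_Icc.2 hab
  have hbv : LocallyBoundedVariationOn f (Icc a b) :=
    BoundedVariationOn.locallyBoundedVariationOn hrect
  have hlength : |variationOnFromTo f (Icc a b) a a - variationOnFromTo f (Icc a b) a b| =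
      (eVariationOn f (Icc a b)).toReal := by
    rw [variationOnFromTo.self, zero_sub, abs_neg, variationOnFromTo.eq_of_le _ _ hab,
      inter_self, ENNReal.abs_toReal]
  rw [← hlength]
  refine hyp.exists_dist_le hgeo ordConnected_Icc (continuousOn_variationOnFromTo hf hbv haI)
    (fun x hx y hy => ?_) haI (right_mem_Icc.2 hab) h n
  rw [variationOnFromTo.sub_right hbv haI hx hy, dist_comm]
  exact dist_le_abs_variationOnFromTo hbv hy hx

theorem stmt_10_general {X : Type*} [MetricSpace X] (δ : ℝ) (hδ : 0 < δ)
    (hyp : DeltaThin X δ)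
    (hgeo : ∀ p q : X, ∃ g : ℝ → X, IsGeodParam g p q)
    (ℓ : ℝ → X) (hℓ : IsGeodLine ℓ) (K C : ℝ)
    (a b : ℝ) (hab : a ≤ b) (f : ℝ → X) (hf : ContinuousOn f (Set.Icc a b))
    (hrect : eVariationOn f (Set.Icc a b) ≠ ⊤)
    (hfar : ∀ t ∈ Set.Icc a b, K ≤ Metric.infDist (f t) (Set.range ℓ))
    (ha : Metric.infDist (f a) (Set.range ℓ) ≤ K + C)
    (hb : Metric.infDist (f b) (Set.range ℓ) ≤ K + C)
    (hd : dist (f a) (f b) ≤ 2 * K + 6 * δ) :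
    ((2 : ℝ) ^ (dist (f a) (f b) / (2 * δ) - max C δ / δ - 5) - 2) * δ ≤
      (eVariationOn f (Set.Icc a b)).toReal := by
  set d := dist (f a) (f b)
  obtain ⟨g, hg⟩ := hgeo (f a) (f b)
  obtain ⟨m, hm, ham, hmb⟩ := hg.exists_midpoint
  obtain ⟨s, hs⟩ := hℓ.exists_dist_eq_infDist (f a)
  obtain ⟨t, ht⟩ := hℓ.exists_dist_eq_infDist (f b)
  have hmℓ : infDist m (range ℓ) ≤ max (K + C + 4 * δ - d / 2) (2 * δ) :=
    hyp.infDist_range_le hδ.le hgeo hℓ hg hm (hs.trans_le ha) (ht.trans_le hb) ham.ge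
      (by rw [dist_comm, hmb])
  have hm_far : ∀ u ∈ Icc a b, d / 2 - max C δ - 4 * δ ≤ dist m (f u) := fun u hu => by
    have := infDist_le_infDist_add_dist (s := range ℓ) (x := f u) (y := m)
    rcases le_max_iff.1 hmℓ with h | h <;>
      linarith [hfar u hu, dist_comm (f u) m, le_max_left C δ, le_max_right C δ]
  have hA : (d / (2 * δ) - max C δ / δ - 5 + 1) * δ = d / 2 - max C δ - 4 * δ := by
    field_simp
    ring
  refine two_rpow_sub_two_mul_le hδ ENNReal.toReal_nonneg fun n => ?_
  obtain ⟨u, hu, hmu⟩ :=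
    hyp.exists_dist_le_of_eVariationOn hgeo hab hf hrect ⟨g, hg, m, hm, (dist_self m).le⟩ n
  rw [hA]
  linarith [hm_far u hu]

/-- Let `f : [a,b] → X` be a continuous rectifiable path staying at distance `≥ K` from the
bi-infinite geodesic `ℓ`, whose endpoints are at distance `≤ K + C` from `ℓ`. If
`d = d(f a, f b) ≤ 2K + 6δ`, then, with `C' = max C δ`,
`L ≥ (2^{d/(2δ) − C'/δ − 5} − 2)·δ`. -/
theorem stmt_10 {X : Type*} [MetricSpace X] [ProperSpace X] (δ : ℝ) (hδ : 0 < δ)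
    (hyp : DeltaThin X δ)
    (hgeo : ∀ p q : X, ∃ g : ℝ → X, IsGeodParam g p q)
    (ℓ : ℝ → X) (hℓ : IsGeodLine ℓ) (K C : ℝ) (hK : 0 < K) (hC : 0 < C)
    (a b : ℝ) (hab : a ≤ b) (f : ℝ → X) (hf : ContinuousOn f (Set.Icc a b))
    (hrect : eVariationOn f (Set.Icc a b) ≠ ⊤)
    (hfar : ∀ t ∈ Set.Icc a b, K ≤ Metric.infDist (f t) (Set.range ℓ))
    (ha : Metric.infDist (f a) (Set.range ℓ) ≤ K + C)
    (hb : Metric.infDist (f b) (Set.range ℓ) ≤ K + C)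
    (hd : dist (f a) (f b) ≤ 2 * K + 6 * δ) :
    ((2 : ℝ) ^ (dist (f a) (f b) / (2 * δ) - max C δ / δ - 5) - 2) * δ ≤
      (eVariationOn f (Set.Icc a b)).toReal :=
  stmt_10_general δ hδ hyp hgeo ℓ hℓ K C a b hab f hf hrect hfar ha hb hd
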